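/- arXiv:2501.16121 — 3 statements merged into one kernel-verified Lean document; each statement's English description precedes it below -/
import Mathlib

section
/- Let n ≥ 2, let u and v be unit vectors in the Euclidean space ℝⁿ with u ≠ v and u ≠ -v, and let 0 < r < 1. Then the distance from the origin to the affine span of {u, v} (the line through u and v), multiplied by the distance from the origin to the set {x ∈ ℝⁿ : ⟨u, x⟩ = -r and ⟨v, x⟩ = -r}, equals r. -/
open scoped RealInnerProductSpace

/-!
For unit vectors `u, v` the midpoint `(u + v)/2` is the foot of the perpendicular from the
origin to the line `uv`, since `u + v ⊥ v - u`; so the first distance is `‖u + v‖ / 2`.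
Every `x` with `⟪u, x⟫ = ⟪v, x⟫ = -r` satisfies `⟪u + v, x⟫ = -2r`, so by Cauchy–Schwarz
`‖x‖ ≥ 2r / ‖u + v‖`, with equality at the multiple of `u + v` lying in the set.
The product of the two distances is therefore `r`.
-/

theorem Metric.infDist_zero_eq_norm_of_forall_norm_le {E : Type*} [SeminormedAddGroup E]
    {s : Set E} {p : E} (hp : p ∈ s) (hmin : ∀ y ∈ s, ‖p‖ ≤ ‖y‖) :
    Metric.infDist 0 s = ‖p‖ :=
  le_antisymm (by simpa using Metric.infDist_le_dist_of_mem (x := 0) hp)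
    ((Metric.le_infDist ⟨p, hp⟩).2 fun y hy => by simpa using hmin y hy)

section

variable {E : Type*} [NormedAddCommGroup E] [InnerProductSpace ℝ E] {u v : E}

theorem norm_add_sq_eq_two_mul_real_inner_add_right (h : ‖u‖ = ‖v‖) :
    ‖u + v‖ ^ 2 = 2 * ⟪u, u + v⟫ := by
  rw [norm_add_sq_real, inner_add_right, real_inner_self_eq_norm_sq, ← h]
  ring

theorem norm_midpoint_le_of_mem_affineSpan_pair (h : ‖u‖ = ‖v‖) {y : E}
    (hy : y ∈ line[ℝ, u, v]) : ‖midpoint ℝ u v‖ ≤ ‖y‖ := by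
  obtain ⟨t, rfl⟩ := mem_affineSpan_pair_iff_exists_lineMap_eq.1 hy
  have hmid : midpoint ℝ u v = (2⁻¹ : ℝ) • (u + v) := by
    rw [midpoint_eq_smul_add, invOf_eq_inv]
  have hdecomp : AffineMap.lineMap u v t = midpoint ℝ u v + (t - 2⁻¹) • (v - u) := by
    rw [AffineMap.lineMap_apply_module', hmid]
    module
  have hperp : ⟪midpoint ℝ u v, (t - 2⁻¹) • (v - u)⟫ = 0 := by
    rw [hmid, real_inner_smul_left, real_inner_smul_right, add_comm u,
      (real_inner_add_sub_eq_zero_iff v u).2 h.symm]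
    ring
  rw [hdecomp, mul_self_le_mul_self_iff (norm_nonneg _) (norm_nonneg _),
    norm_add_sq_eq_norm_sq_add_norm_sq_real hperp]
  exact le_add_of_nonneg_right (mul_self_nonneg _)

theorem infDist_zero_affineSpan_pair (h : ‖u‖ = ‖v‖) :
    Metric.infDist 0 (line[ℝ, u, v] : Set E) = ‖u + v‖ / 2 := by
  have hmem : midpoint ℝ u v ∈ line[ℝ, u, v] := by
    rw [← lineMap_inv_two]
    exact AffineMap.lineMap_mem_affineSpan_pair _ u v
  have hmid : ‖midpoint ℝ u v‖ = ‖u + v‖ / 2 := by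
    rw [midpoint_eq_smul_add, invOf_eq_inv, norm_smul, Real.norm_of_nonneg (by norm_num)]
    ring
  rw [← hmid]
  exact Metric.infDist_zero_eq_norm_of_forall_norm_le hmem
    fun y hy => norm_midpoint_le_of_mem_affineSpan_pair h hy

theorem infDist_zero_setOf_inner_eq_and_inner_eq (h : ‖u‖ = ‖v‖) (huv : u + v ≠ 0) (a : ℝ) :
    Metric.infDist 0 {x : E | ⟪u, x⟫ = a ∧ ⟪v, x⟫ = a} = 2 * |a| / ‖u + v‖ := by
  have hw : 0 < ‖u + v‖ := norm_pos_iff.2 huv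
  set x₀ : E := (2 * a / ‖u + v‖ ^ 2) • (u + v)
  have hx₀_inner {z : E} (hz : ‖u + v‖ ^ 2 = 2 * ⟪z, u + v⟫) : ⟪z, x₀⟫ = a := by
    have : ⟪z, u + v⟫ ≠ 0 := by nlinarith
    rw [real_inner_smul_right, hz]
    field_simp
  have hu : ⟪u, x₀⟫ = a := hx₀_inner (norm_add_sq_eq_two_mul_real_inner_add_right h)
  have hv : ⟪v, x₀⟫ = a := hx₀_inner <| by
    rw [add_comm u v]; exact norm_add_sq_eq_two_mul_real_inner_add_right h.symm
  have hx₀ : ‖x₀‖ = 2 * |a| / ‖u + v‖ := by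
    rw [norm_smul, Real.norm_eq_abs, abs_div, abs_mul, abs_two, abs_of_pos (pow_pos hw 2)]
    field_simp
  rw [← hx₀]
  refine Metric.infDist_zero_eq_norm_of_forall_norm_le ⟨hu, hv⟩ fun y ⟨hyu, hyv⟩ => ?_
  have hcs : 2 * |a| ≤ ‖u + v‖ * ‖y‖ := by
    simpa [inner_add_left, hyu, hyv, ← two_mul, abs_mul] using abs_real_inner_le_norm (u + v) y
  rw [hx₀, div_le_iff₀ hw]
  linarith

end

theorem stmt_0_general (n : ℕ) (u v : EuclideanSpace ℝ (Fin n))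
    (hu : ‖u‖ = 1) (hv : ‖v‖ = 1) (huv' : u ≠ -v)
    (r : ℝ) (hr0 : 0 < r) :
    Metric.infDist 0 ((affineSpan ℝ {u, v} : AffineSubspace ℝ (EuclideanSpace ℝ (Fin n))) : Set (EuclideanSpace ℝ (Fin n))) *
      Metric.infDist 0 {x : EuclideanSpace ℝ (Fin n) | ⟪u, x⟫ = -r ∧ ⟪v, x⟫ = -r} = r := by
  have hnorm : ‖u‖ = ‖v‖ := hu.trans hv.symm
  have hsum : u + v ≠ 0 := fun h => huv' (eq_neg_of_add_eq_zero_left h)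
  rw [infDist_zero_affineSpan_pair hnorm, infDist_zero_setOf_inner_eq_and_inner_eq hnorm hsum,
    abs_neg, abs_of_pos hr0]
  field_simp [norm_ne_zero_iff.2 hsum]

/-- Proposition 1 of the paper: for unit vectors `u ≠ ±v` in `ℝⁿ` and `0 < r < 1`,
the distance from the origin to the line through `u` and `v`, multiplied by the distance
from the origin to `{x : ⟪u,x⟫ = -r ∧ ⟪v,x⟫ = -r}`, equals `r`. -/
theorem stmt_0 (n : ℕ) (hn : 2 ≤ n) (u v : EuclideanSpace ℝ (Fin n))
    (hu : ‖u‖ = 1) (hv : ‖v‖ = 1) (huv : u ≠ v) (huv' : u ≠ -v)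
    (r : ℝ) (hr0 : 0 < r) (hr1 : r < 1) :
    Metric.infDist 0 ((affineSpan ℝ {u, v} : AffineSubspace ℝ (EuclideanSpace ℝ (Fin n))) : Set (EuclideanSpace ℝ (Fin n))) *
      Metric.infDist 0 {x : EuclideanSpace ℝ (Fin n) | ⟪u, x⟫ = -r ∧ ⟪v, x⟫ = -r} = r :=
  stmt_0_general n u v hu hv huv' r hr0
end

section
/- The following inequality holds: arccos(√((5 + 2√5)/15)) + arccos((10 - √5)/15) + arccos(√5/5) < π. -/
open Real

lemma le_arcsin_of_mem {x : ℝ} (h0 : 0 ≤ x) (h1 : x ≤ 1) : x ≤ Real.arcsin x := by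
  have hx2 : x ≤ π / 2 := h1.trans (by nlinarith [Real.pi_gt_three])
  have := Real.arcsin_sin (by linarith [Real.pi_pos] : -(π/2) ≤ x) hx2
  calc x = Real.arcsin (Real.sin x) := this.symm
    _ ≤ Real.arcsin x := Real.monotone_arcsin (Real.sin_le h0)

/-- `arccos(√((5+2√5)/15)) + arccos((10-√5)/15) + arccos(√5/5) < π`. -/
theorem stmt_11 :
    Real.arccos (Real.sqrt ((5 + 2 * Real.sqrt 5) / 15)) +
      Real.arccos ((10 - Real.sqrt 5) / 15) +
      Real.arccos (Real.sqrt 5 / 5) < π := by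
  have h5 : Real.sqrt 5 ^ 2 = 5 := Real.sq_sqrt (by norm_num)
  have h5l : (2.236 : ℝ) < Real.sqrt 5 := by nlinarith [Real.sqrt_nonneg 5]
  have h5u : Real.sqrt 5 < 2.2361 := by nlinarith [Real.sqrt_nonneg 5]
  set a := Real.sqrt ((5 + 2 * Real.sqrt 5) / 15) with ha
  set b := (10 - Real.sqrt 5) / 15 with hb
  set c := Real.sqrt 5 / 5 with hc
  have ha2 : a ^ 2 = (5 + 2 * Real.sqrt 5) / 15 := Real.sq_sqrt (by positivity)
  have ha0 : 0 ≤ a := Real.sqrt_nonneg _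
  have hal : (0.7946 : ℝ) < a := by nlinarith
  have ha1 : a ≤ 1 := by nlinarith
  have hb0 : 0 ≤ b := by rw [hb]; nlinarith
  have hb1 : b ≤ 1 := by rw [hb]; nlinarith
  have hbl : (0.5175 : ℝ) < b := by rw [hb]; nlinarith
  have hc0 : 0 ≤ c := by positivity
  have hc1 : c ≤ 1 := by rw [hc]; nlinarith
  have hcl : (0.4472 : ℝ) < c := by rw [hc]; nlinarith
  have sa := le_arcsin_of_mem ha0 ha1
  have sb := le_arcsin_of_mem hb0 hb1
  have sc := le_arcsin_of_mem hc0 hc1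
  rw [Real.arccos_eq_pi_div_two_sub_arcsin, Real.arccos_eq_pi_div_two_sub_arcsin,
    Real.arccos_eq_pi_div_two_sub_arcsin]
  have hpi : π < 3.15 := Real.pi_lt_d2
  linarith
end

section
/- Let 0 < r < 1 and let a, b ∈ ℝ³ be unit vectors with -1 < ⟨a,b⟩ < 1 and 1 + ⟨a,b⟩ - 2r² ≥ 0. Then ‖Φ_r(a,b)‖ = 1, i.e. Φ_r(a,b) lies on the unit sphere. -/
open scoped RealInnerProductSpace

/-- The cross product on `ℝ³` (as `EuclideanSpace ℝ (Fin 3)`). -/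
noncomputable def cross3 (a b : EuclideanSpace ℝ (Fin 3)) : EuclideanSpace ℝ (Fin 3) :=
  (WithLp.equiv 2 (Fin 3 → ℝ)).symm
    ![a 1 * b 2 - a 2 * b 1, a 2 * b 0 - a 0 * b 2, a 0 * b 1 - a 1 * b 0]

/-- The dual-edge map of the paper:
`Φ_r(a,b) = (1/(1+⟪a,b⟫))·(√((1+⟪a,b⟫-2r²)/(1-⟪a,b⟫))·(a × b) - r·(a+b))`. -/
noncomputable def Phi (r : ℝ) (a b : EuclideanSpace ℝ (Fin 3)) : EuclideanSpace ℝ (Fin 3) :=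
  (1 / (1 + ⟪a, b⟫)) •
    (Real.sqrt ((1 + ⟪a, b⟫ - 2 * r ^ 2) / (1 - ⟪a, b⟫)) • cross3 a b - r • (a + b))

lemma real_inner_cross3_self_left (a b : EuclideanSpace ℝ (Fin 3)) : ⟪cross3 a b, a⟫ = 0 := by
  simp only [cross3, WithLp.equiv_symm_apply, PiLp.inner_apply, RCLike.inner_apply, Real.ringHom_apply,
    Fin.sum_univ_three, Matrix.cons_val_zero, Matrix.cons_val_one, Matrix.cons_val]
  ring

lemma real_inner_cross3_self_right (a b : EuclideanSpace ℝ (Fin 3)) : ⟪cross3 a b, b⟫ = 0 := by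
  simp only [cross3, WithLp.equiv_symm_apply, PiLp.inner_apply, RCLike.inner_apply, Real.ringHom_apply,
    Fin.sum_univ_three, Matrix.cons_val_zero, Matrix.cons_val_one, Matrix.cons_val]
  ring

lemma real_inner_cross3_add (a b : EuclideanSpace ℝ (Fin 3)) : ⟪cross3 a b, a + b⟫ = 0 := by
  rw [inner_add_right, real_inner_cross3_self_left, real_inner_cross3_self_right, add_zero]

lemma norm_cross3_sq (a b : EuclideanSpace ℝ (Fin 3)) :
    ‖cross3 a b‖ ^ 2 = ‖a‖ ^ 2 * ‖b‖ ^ 2 - ⟪a, b⟫ ^ 2 := by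
  simp only [cross3, WithLp.equiv_symm_apply, PiLp.inner_apply, RCLike.inner_apply, Real.ringHom_apply,
    Fin.sum_univ_three, Matrix.cons_val_zero, Matrix.cons_val_one, Matrix.cons_val,
    EuclideanSpace.norm_sq_eq, Real.norm_eq_abs, sq_abs]
  ring

lemma norm_add_sq_of_norm_eq_one {F : Type*} [NormedAddCommGroup F] [InnerProductSpace ℝ F]
    {a b : F} (ha : ‖a‖ = 1) (hb : ‖b‖ = 1) : ‖a + b‖ ^ 2 = 2 * (1 + ⟪a, b⟫) := by
  rw [norm_add_sq_real, ha, hb]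
  ring

lemma norm_cross3_sq_of_norm_eq_one {a b : EuclideanSpace ℝ (Fin 3)} (ha : ‖a‖ = 1)
    (hb : ‖b‖ = 1) : ‖cross3 a b‖ ^ 2 = (1 - ⟪a, b⟫) * (1 + ⟪a, b⟫) := by
  rw [norm_cross3_sq, ha, hb]
  ring

lemma norm_Phi_sq {a b : EuclideanSpace ℝ (Fin 3)} (ha : ‖a‖ = 1) (hb : ‖b‖ = 1) (r : ℝ) :
    ‖Phi r a b‖ ^ 2 = (√((1 + ⟪a, b⟫ - 2 * r ^ 2) / (1 - ⟪a, b⟫)) ^ 2 * (1 - ⟪a, b⟫)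
      + 2 * r ^ 2) / (1 + ⟪a, b⟫) := by
  set s := √((1 + ⟪a, b⟫ - 2 * r ^ 2) / (1 - ⟪a, b⟫))
  have hpyth : ‖s • cross3 a b - r • (a + b)‖ ^ 2
      = s ^ 2 * ‖cross3 a b‖ ^ 2 + r ^ 2 * ‖a + b‖ ^ 2 := by
    have horth : ⟪s • cross3 a b, r • (a + b)⟫ = 0 := by
      rw [real_inner_smul_left, real_inner_smul_right, real_inner_cross3_add, mul_zero, mul_zero]
    rw [norm_sub_sq_real, horth, norm_smul, norm_smul, mul_pow, mul_pow, Real.norm_eq_abs,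
      Real.norm_eq_abs, sq_abs, sq_abs]
    ring
  rw [Phi, norm_smul, mul_pow, hpyth, norm_cross3_sq_of_norm_eq_one ha hb,
    norm_add_sq_of_norm_eq_one ha hb, norm_div, norm_one, div_pow, Real.norm_eq_abs, sq_abs]
  rcases eq_or_ne (1 + ⟪a, b⟫) 0 with h | h
  · simp [h]
  · field_simp

theorem stmt_13_general (r : ℝ)
    (a b : EuclideanSpace ℝ (Fin 3)) (ha : ‖a‖ = 1) (hb : ‖b‖ = 1)
    (h₁ : -1 < ⟪a, b⟫) (h₂ : ⟪a, b⟫ < 1) (h₃ : 0 ≤ 1 + ⟪a, b⟫ - 2 * r ^ 2) :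
    ‖Phi r a b‖ = 1 := by
  have hs : √((1 + ⟪a, b⟫ - 2 * r ^ 2) / (1 - ⟪a, b⟫)) ^ 2 * (1 - ⟪a, b⟫)
      = 1 + ⟪a, b⟫ - 2 * r ^ 2 := by
    rw [Real.sq_sqrt (div_nonneg h₃ (sub_nonneg.2 h₂.le)), div_mul_cancel₀ _ (sub_pos.2 h₂).ne']
  have hsq : ‖Phi r a b‖ ^ 2 = 1 := by
    rw [norm_Phi_sq ha hb, hs, sub_add_cancel, div_self (by linarith)]
  exact (pow_eq_one_iff_of_nonneg (norm_nonneg _) two_ne_zero).1 hsq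

/-- `Φ_r(a,b)` lies on the unit sphere. -/
theorem stmt_13 (r : ℝ) (hr0 : 0 < r) (hr1 : r < 1)
    (a b : EuclideanSpace ℝ (Fin 3)) (ha : ‖a‖ = 1) (hb : ‖b‖ = 1)
    (h₁ : -1 < ⟪a, b⟫) (h₂ : ⟪a, b⟫ < 1) (h₃ : 0 ≤ 1 + ⟪a, b⟫ - 2 * r ^ 2) :
    ‖Phi r a b‖ = 1 :=
  stmt_13_general r a b ha hb h₁ h₂ h₃
end
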